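/- arXiv:2203.00334 — 3 statements merged into one kernel-verified Lean document; each statement's English description precedes it below -/
import Mathlib

section
/- Let G be an Abelian group, H a subgroup of G, and S a subgroup of Ĝ. Then the closure of H in G_S equals A(G, A(S, H)) = {g ∈ G : φ(g) = 0 for every φ ∈ S with φ(h) = 0 for all h ∈ H}. -/
/-- The coarsest topology on `G` making every character in `S` continuous. -/
noncomputable def tauS {G : Type*} [AddCommGroup G]
    (S : AddSubgroup (G →+ AddCircle (1 : ℝ))) : TopologicalSpace G :=
  ⨅ φ ∈ S, TopologicalSpace.induced ⇑φ inferInstance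

/-- The topology of pointwise convergence on the dual group `Ĝ`. -/
noncomputable def dualTop (G : Type*) [AddCommGroup G] :
    TopologicalSpace (G →+ AddCircle (1 : ℝ)) :=
  TopologicalSpace.induced (fun φ => (φ : G → AddCircle (1 : ℝ))) Pi.topologicalSpace

/-- A group topology on `G` is totally bounded if it is Hausdorff, makes `G` a
topological group, and every neighborhood `U` of `0` satisfies `G = F + U` for
some finite `F`. -/
def IsTotallyBoundedGroupTopology {G : Type*} [AddCommGroup G]
    (t : TopologicalSpace G) : Prop :=
  @IsTopologicalAddGroup G t _ ∧ @T2Space G t ∧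
    ∀ U ∈ @nhds G t 0, ∃ F : Set G, F.Finite ∧ ∀ g : G, ∃ f ∈ F, ∃ u ∈ U, g = f + u

/-! The topology `τ_S` is induced by `Φ : G → 𝕋^S`, `g ↦ (φ g)_φ`, so `g` lies in the closure of
`H` iff `Φ g` lies in the closed subgroup `K = closure (Φ H)`. A point outside a closed subgroup of
`𝕋^S` is already separated from it on finitely many coordinates `I`, and a closed subgroup of `𝕋^I`
is cut out by characters `z ↦ ∑ mᵢ zᵢ`: its preimage `L ⊆ ℝ^I` is closed and contains `ℤ^I`, and a
closed subgroup of a real vector space is a subspace plus a discrete lattice in a complement, so a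
coordinate functional of a lattice basis is integer-valued on `L` but not at a lift of the point.
The character `∑ mᵢ φᵢ` then lies in `S`, kills `H`, and does not kill `g`. -/

section RealSpace

open Filter Topology Module Submodule Set

variable {E : Type*} [NormedAddCommGroup E] [NormedSpace ℝ E]

theorem AddSubgroup.smul_mem_of_tendsto_normalize {L : AddSubgroup E} (hL : IsClosed (L : Set E))
    {l : ℕ → E} (hlL : ∀ n, l n ∈ L) (hl0 : ∀ n, l n ≠ 0) (hlim : Tendsto l atTop (𝓝 0))
    {u : E} (hu : Tendsto (fun n ↦ ‖l n‖⁻¹ • l n) atTop (𝓝 u)) (t : ℝ) : t • u ∈ L := by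
  have hpos : ∀ n, 0 < ‖l n‖ := fun n ↦ norm_pos_iff.2 (hl0 n)
  -- `round (t / ‖l n‖) • l n` is a point of `L` approximating `t • u`
  set k : ℕ → ℤ := fun n ↦ round (t / ‖l n‖)
  have hdist : ∀ n, |(k n : ℝ) * ‖l n‖ - t| ≤ ‖l n‖ / 2 := fun n ↦ by
    have h := abs_sub_round (t / ‖l n‖)
    rw [abs_sub_comm] at h
    calc |(k n : ℝ) * ‖l n‖ - t| = |(k n : ℝ) - t / ‖l n‖| * ‖l n‖ := by
          rw [← abs_of_pos (hpos n), ← abs_mul, abs_of_pos (hpos n), sub_mul,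
            div_mul_cancel₀ _ (hpos n).ne']
      _ ≤ 1 / 2 * ‖l n‖ := by gcongr
      _ = ‖l n‖ / 2 := by ring
  have hscal : Tendsto (fun n ↦ (k n : ℝ) * ‖l n‖) atTop (𝓝 t) := by
    refine tendsto_iff_norm_sub_tendsto_zero.2 (squeeze_zero (fun _ ↦ norm_nonneg _) hdist ?_)
    simpa using (tendsto_norm_zero.comp hlim).div_const 2
  have hmem : ∀ n, ((k n : ℝ) * ‖l n‖) • (‖l n‖⁻¹ • l n) ∈ L := fun n ↦ by
    rw [smul_smul, mul_assoc, mul_inv_cancel₀ (hpos n).ne', mul_one, Int.cast_smul_eq_zsmul]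
    exact zsmul_mem (hlL n) _
  exact hL.mem_of_tendsto (hscal.smul hu) (Eventually.of_forall hmem)

theorem AddSubgroup.exists_forall_smul_mem_of_not_isolated [FiniteDimensional ℝ E]
    {L : AddSubgroup E} (hL : IsClosed (L : Set E)) (h : ∀ ε > 0, ∃ l ∈ L, l ≠ 0 ∧ ‖l‖ < ε) :
    ∃ u : E, u ≠ 0 ∧ ∀ t : ℝ, t • u ∈ L := by
  choose l hlL hl0 hlε using fun n : ℕ ↦ h (1 / (n + 1)) Nat.one_div_pos_of_nat
  have hlim : Tendsto l atTop (𝓝 0) :=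
    squeeze_zero_norm (fun n ↦ (hlε n).le) tendsto_one_div_add_atTop_nhds_zero_nat
  obtain ⟨u, hu, σ, hσ, hσu⟩ := (isCompact_sphere (0 : E) 1).tendsto_subseq
    (x := fun n ↦ ‖l n‖⁻¹ • l n) fun n ↦ by simp [norm_smul, hl0 n]
  exact ⟨u, ne_zero_of_mem_sphere one_ne_zero ⟨u, hu⟩, L.smul_mem_of_tendsto_normalize hL
    (fun n ↦ hlL (σ n)) (fun n ↦ hl0 (σ n)) (hlim.comp hσ.tendsto_atTop) hσu⟩

variable [FiniteDimensional ℝ E]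

theorem IsZLattice.exists_dual_separating {L : Submodule ℤ E} [DiscreteTopology L]
    [IsZLattice ℝ L] {y : E} (hy : y ∉ L) :
    ∃ f : E →ₗ[ℝ] ℝ, MapsTo f L (range Int.cast) ∧ f y ∉ range Int.cast := by
  let b := Free.chooseBasis ℤ L
  let B := b.ofZLatticeBasis ℝ L
  obtain ⟨i, hi⟩ : ∃ i, B.repr y i ∉ range Int.cast := by
    by_contra! h
    choose n hn using h
    refine hy ?_
    rw [← b.ofZLatticeBasis_span ℝ, ← B.sum_repr y]
    refine sum_mem fun i _ ↦ ?_
    rw [← hn i, Int.cast_smul_eq_zsmul]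
    exact zsmul_mem (subset_span (mem_range_self i)) _
  refine ⟨B.coord i, fun l hl ↦ ⟨b.repr ⟨l, hl⟩ i, ?_⟩, hi⟩
  simpa [B] using (b.ofZLatticeBasis_repr_apply ℝ L ⟨l, hl⟩ i).symm

theorem Submodule.exists_dual_separating_of_discreteTopology {L : Submodule ℤ E}
    [DiscreteTopology L] {y : E} (hy : y ∉ L) :
    ∃ f : E →ₗ[ℝ] ℝ, MapsTo f L (range Int.cast) ∧ f y ∉ range Int.cast := by
  set U := span ℝ (L : Set E)
  have hLU : ∀ l ∈ L, l ∈ U := fun l hl ↦ subset_span hl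
  let L₀ : Submodule ℤ U := L.comap (U.subtype.restrictScalars ℤ)
  have : DiscreteTopology L₀ :=
    .preimage_of_continuous_injective (L : Set E) continuous_subtype_val
      (injective_subtype _)
  have : IsZLattice ℝ L₀ := ⟨by
    rw [← (map_injective_of_injective (injective_subtype U)).eq_iff, map_span, map_top,
      range_subtype]
    congr
    ext x
    exact ⟨fun ⟨x, hx, hxe⟩ ↦ hxe ▸ hx, fun hx ↦ ⟨⟨x, hLU x hx⟩, hx, rfl⟩⟩⟩
  by_cases hyU : y ∈ U
  · obtain ⟨f₀, hf₀L, hf₀y⟩ := IsZLattice.exists_dual_separating (L := L₀) (y := ⟨y, hyU⟩) hy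
    obtain ⟨f, hf⟩ := LinearMap.exists_extend f₀
    have hff₀ : ∀ x : U, f x = f₀ x := fun x ↦ congr($hf x)
    exact ⟨f, fun l hl ↦ hff₀ ⟨l, hLU l hl⟩ ▸ hf₀L (x := ⟨l, hLU l hl⟩) hl,
      hff₀ ⟨y, hyU⟩ ▸ hf₀y⟩
  · obtain ⟨f, hfU, hfy⟩ := LinearMap.exists_extend_of_notMem (0 : U →ₗ[ℝ] ℝ) hyU (1 / 2)
    refine ⟨f, fun l hl ↦ ⟨0, ?_⟩, ?_⟩
    · simpa using congr($hfU ⟨l, hLU l hl⟩).symm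
    · rintro ⟨n, hn⟩
      rw [hfy] at hn
      have : (2 * n : ℝ) = 1 := by rw [hn]; norm_num
      have : (2 * n : ℤ) = 1 := by exact_mod_cast this
      omega

theorem AddSubgroup.mem_iff_projection_mem {R M : Type*} [Ring R] [AddCommGroup M] [Module R M]
    {L : AddSubgroup M} {V W : Submodule R M} (hVW : IsCompl V W) (hVL : (V : Set M) ⊆ L)
    (x : M) : x ∈ L ↔ W.projection V hVW.symm x ∈ L := by
  conv_lhs => rw [← projection_add_projection_eq_self hVW x]
  exact L.add_mem_cancel_left (hVL (projection_apply_mem hVW x))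

theorem AddSubgroup.exists_dual_separating_of_isClosed {L : AddSubgroup E}
    (hL : IsClosed (L : Set E)) {y : E} (hy : y ∉ L) :
    ∃ f : E →ₗ[ℝ] ℝ, MapsTo f L (range Int.cast) ∧ f y ∉ range Int.cast := by
  obtain ⟨n, hn⟩ : ∃ n, finrank ℝ E ≤ n := ⟨_, le_rfl⟩
  induction n generalizing E with
  | zero =>
    have : Subsingleton E := finrank_zero_iff.1 (Nat.le_zero.1 hn)
    exact absurd (Subsingleton.elim y 0 ▸ L.zero_mem) hy
  | succ n ih =>
    by_cases hline : ∃ u : E, u ≠ 0 ∧ ∀ t : ℝ, t • u ∈ L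
    · -- `L` is invariant under translation by the line, so it is the preimage of its projection
      obtain ⟨u, hu, huL⟩ := hline
      obtain ⟨W, hW⟩ := (span ℝ {u}).exists_isCompl
      have hp := L.mem_iff_projection_mem hW fun v hv ↦ by
        obtain ⟨t, rfl⟩ := mem_span_singleton.1 hv
        exact huL t
      have hWn : finrank ℝ W ≤ n := by
        have := finrank_add_eq_of_isCompl hW
        rw [finrank_span_singleton hu] at this
        omega
      obtain ⟨f, hfL, hfy⟩ := ih (L := L.comap W.subtype.toAddMonoidHom)
        (hL.preimage continuous_subtype_val) ((hp y).not.1 hy) hWn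
      exact ⟨f ∘ₗ W.projectionOnto _ hW.symm, fun l hl ↦ hfL ((hp l).1 hl), hfy⟩
    · push Not at hline
      obtain ⟨ε, hε, hsep⟩ : ∃ ε > 0, ∀ l ∈ L, l ≠ 0 → ε ≤ ‖l‖ := by
        by_contra! h
        obtain ⟨u, hu, huL⟩ := L.exists_forall_smul_mem_of_not_isolated hL h
        obtain ⟨t, ht⟩ := hline u hu
        exact ht (huL t)
      have : DiscreteTopology L.toIntSubmodule :=
        .of_forall_le_norm hε fun x hx ↦ hsep x x.2 (by simpa using hx)
      exact exists_dual_separating_of_discreteTopology (L := L.toIntSubmodule) hy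

end RealSpace

section Torus

open Set

theorem UnitAddCircle.coe_eq_zero_iff_mem_range_intCast {r : ℝ} :
    (r : UnitAddCircle) = 0 ↔ r ∈ range ((↑) : ℤ → ℝ) := by
  simp [AddSubgroup.mem_zmultiples_iff]

theorem UnitAddCircle.exists_separating_weights {ι : Type*} [Fintype ι]
    {K : AddSubgroup (ι → UnitAddCircle)} (hK : IsClosed (K : Set (ι → UnitAddCircle)))
    {x : ι → UnitAddCircle} (hx : x ∉ K) :
    ∃ m : ι → ℤ, (∀ k ∈ K, ∑ i, m i • k i = 0) ∧ ∑ i, m i • x i ≠ 0 := by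
  classical
  let q : (ι → ℝ) →+ (ι → UnitAddCircle) := (QuotientAddGroup.mk' _).compLeft ι
  have hq : Continuous q :=
    continuous_pi fun i ↦ (AddCircle.continuous_mk' 1).comp (continuous_apply i)
  have hq_surj : Function.Surjective q := (QuotientAddGroup.mk'_surjective _).comp_left
  obtain ⟨y, rfl⟩ := hq_surj x
  obtain ⟨f, hfL, hfy⟩ :=
    AddSubgroup.exists_dual_separating_of_isClosed (L := K.comap q) (hK.preimage hq) hx
  have hbasis : ∀ i, q (Pi.single i 1) ∈ K := fun i ↦ by
    convert K.zero_mem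
    ext j
    by_cases hij : j = i
    · subst hij; simp [q]
    · simp [q, hij]
  choose m hm using fun i ↦ hfL (hbasis i)
  have key : ∀ v, ∑ i, m i • q v i = (f v : UnitAddCircle) := fun v ↦ by
    have hf : f v = ∑ i, (m i : ℝ) * v i := by
      rw [f.pi_apply_eq_sum_univ v]
      refine Finset.sum_congr rfl fun i _ ↦ ?_
      rw [smul_eq_mul, mul_comm, hm i]
      congr
      ext j
      simp [Pi.single_apply, eq_comm]
    rw [hf, ← QuotientAddGroup.mk'_apply, map_sum]
    refine Finset.sum_congr rfl fun i _ ↦ ?_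
    rw [← zsmul_eq_mul, map_zsmul]
    rfl
  refine ⟨m, fun k hk ↦ ?_, ?_⟩
  · obtain ⟨v, rfl⟩ := hq_surj k
    exact key v ▸ UnitAddCircle.coe_eq_zero_iff_mem_range_intCast.2 (hfL hk)
  · exact key y ▸ mt UnitAddCircle.coe_eq_zero_iff_mem_range_intCast.1 hfy

theorem UnitAddCircle.exists_separating_finset_weights {ι : Type*}
    {K : AddSubgroup (ι → UnitAddCircle)} (hK : IsClosed (K : Set (ι → UnitAddCircle)))
    {x : ι → UnitAddCircle} (hx : x ∉ K) :
    ∃ (I : Finset ι) (m : I → ℤ), (∀ k ∈ K, ∑ i, m i • k i = 0) ∧ ∑ i, m i • x i ≠ 0 := by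
  obtain ⟨I, u, hu, hIK⟩ := isOpen_pi_iff.1 hK.isOpen_compl x hx
  let r : (ι → UnitAddCircle) →+ (I → UnitAddCircle) :=
    AddMonoidHom.pi fun i : I ↦ Pi.evalAddMonoidHom (fun _ ↦ UnitAddCircle) i.1
  have hr : r x ∉ (K.map r).topologicalClosure := fun hrx ↦ by
    obtain ⟨_, hku, k, hk, rfl⟩ := mem_closure_iff.1 hrx (univ.pi fun i : I ↦ u i)
      (isOpen_set_pi finite_univ fun i _ ↦ (hu i i.2).1) fun i _ ↦ (hu i i.2).2
    exact hIK (fun i hi ↦ hku ⟨i, hi⟩ (mem_univ _)) hk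
  obtain ⟨m, hmK, hmx⟩ := exists_separating_weights (K.map r).isClosed_topologicalClosure hr
  exact ⟨I, m, fun k hk ↦ hmK (r k) ((K.map r).le_topologicalClosure ⟨k, hk, rfl⟩), hmx⟩

end Torus

theorem tauS_eq_induced {G : Type*} [AddCommGroup G] (S : AddSubgroup (G →+ UnitAddCircle)) :
    tauS S = .induced (fun g (φ : S) ↦ (φ : G →+ UnitAddCircle) g) Pi.topologicalSpace := by
  rw [induced_to_pi, tauS, iInf_subtype']

theorem stmt10 {G : Type*} [AddCommGroup G] (H : AddSubgroup G)
    (S : AddSubgroup (G →+ AddCircle (1 : ℝ))) :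
    @closure G (tauS S) (H : Set G) =
      {g : G | ∀ φ ∈ S, (∀ h ∈ H, φ h = 0) → φ g = 0} := by
  let _ : TopologicalSpace G := tauS S
  let Φ : G →+ (S → UnitAddCircle) := AddMonoidHom.pi fun φ : S ↦ (φ : G →+ UnitAddCircle)
  have hΦ : Topology.IsInducing Φ := ⟨tauS_eq_induced S⟩
  ext g
  refine ⟨fun hg φ hφ hφH ↦ ?_, fun hg ↦ ?_⟩
  · have hφ_cont : Continuous φ := (continuous_apply (⟨φ, hφ⟩ : S)).comp hΦ.continuous
    exact closure_minimal hφH (isClosed_singleton.preimage hφ_cont) hg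
  · rw [hΦ.closure_eq_preimage_closure_image]
    by_contra hgK
    obtain ⟨I, m, hmK, hmg⟩ := UnitAddCircle.exists_separating_finset_weights
      (H.map Φ).isClosed_topologicalClosure hgK
    let χ : G →+ UnitAddCircle := ∑ i, m i • (i : S)
    have hχ : ∀ a, χ a = ∑ i, m i • Φ a i := fun a ↦ by simp [χ, Φ]
    refine hmg (hχ g ▸ hg χ (sum_mem fun i _ ↦ zsmul_mem (i : S).2 _) fun h hh ↦ ?_)
    exact hχ h ▸ hmK _ ((H.map Φ).le_topologicalClosure ⟨h, hh, rfl⟩)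
end

section
/- Let G be a torsion-free Abelian group and let S be an essential subgroup of Ĝ, i.e., S ∩ B ≠ {0} for every nontrivial subgroup B of Ĝ. Then S is dense in Ĝ (with respect to the topology of pointwise convergence). -/
/-!
The closure of `S` in `Ĝ` is detected on finite subsets `F ⊆ G`: it suffices that the restriction
of every character to `F` lies in the closure of the image of `S` in the torus `𝕋^F`. By Fourier
analysis on `𝕋^F`, a point lies in the closure of a subgroup `D` as soon as it satisfies every integer
relation `∑ n_g x_g = 0` satisfied by `D`: the function `z ↦ ‖z mod D‖` is `D`-invariant, so its
Fourier spectrum annihilates `D`; the function is therefore also invariant under translation by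
such a point, and so vanishes there as it does at `0`. An
integer relation satisfied by the restrictions of `S` says that `S` annihilates `h = ∑ n_g g`, and
essentiality forces `h = 0`: otherwise a character `χ₀` with `χ₀ h = √2` exists because `𝕋` is
divisible, and some nonzero multiple `n χ₀ ∈ S` satisfies `(n χ₀) h = n √2 ≠ 0` in `𝕋`.
-/

open MeasureTheory AddCircle

namespace UnitAddTorus

-- `mFourierCoeff` integrates against the Haar probability measure on each circle factor, which
-- Mathlib installs only locally (the global `volume` on `AddCircle` is a different instance).
attribute [local instance] instMeasureSpaceUnitAddCircle instIsAddHaarMeasureUnitAddCircleVolume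

variable {d : Type*} [Fintype d]

lemma mFourier_apply_eq_toCircle (n : d → ℤ) (x : UnitAddTorus d) :
    mFourier n x = toCircle (∑ i, n i • x i) := by
  simp only [mFourier, ContinuousMap.coe_mk, fourier_apply]
  induction (Finset.univ : Finset d) using Finset.cons_induction with
  | empty => simp
  | cons a s ha ih => simp [Finset.prod_cons, Finset.sum_cons, ih, toCircle_add]

lemma mFourier_eq_one_iff {n : d → ℤ} {x : UnitAddTorus d} :
    mFourier n x = 1 ↔ ∑ i, n i • x i = 0 := by
  rw [mFourier_apply_eq_toCircle, ← Circle.coe_one, Circle.coe_inj, ← toCircle_zero (T := 1),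
    (injective_toCircle one_ne_zero).eq_iff]

lemma mFourier_add_apply (n : d → ℤ) (x y : UnitAddTorus d) :
    mFourier n (x + y) = mFourier n x * mFourier n y := by
  simp only [mFourier_apply_eq_toCircle, Pi.add_apply, smul_add, Finset.sum_add_distrib,
    toCircle_add, Circle.coe_mul]

lemma mFourierCoeff_comp_add_right (f : UnitAddTorus d → ℂ) (y : UnitAddTorus d) (n : d → ℤ) :
    mFourierCoeff (fun x ↦ f (x + y)) n = mFourier n y * mFourierCoeff f n := by
  have hshift (t : UnitAddTorus d) :
      mFourier (-n) t = mFourier n y * mFourier (-n) (t + y) := by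
    rw [mFourier_add_apply, mul_left_comm, ← mFourier_add, add_neg_cancel, mFourier_zero,
      ContinuousMap.one_apply, mul_one]
  calc mFourierCoeff (fun x ↦ f (x + y)) n
      = ∫ t, mFourier n y * (mFourier (-n) (t + y) * f (t + y)) := by
        simp only [mFourierCoeff, smul_eq_mul]
        congr 1 with t
        rw [hshift t, mul_assoc]
    _ = mFourier n y * mFourierCoeff f n := by
        rw [integral_const_mul, integral_add_right_eq_self (fun t ↦ mFourier (-n) t * f t) y]
        rfl

theorem eq_of_mFourierCoeff_eq {f g : C(UnitAddTorus d, ℂ)}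
    (h : ∀ n, mFourierCoeff f n = mFourierCoeff g n) : f = g := by
  apply ContinuousMap.toLp_injective (p := 2) (𝕜 := ℂ) volume
  apply mFourierBasis.repr.injective
  ext n
  simp only [mFourierBasis_repr, mFourierCoeff_toLp, h]

theorem mem_closure_of_forall_sum_zsmul_eq_zero (D : AddSubgroup (UnitAddTorus d))
    {x : UnitAddTorus d}
    (hx : ∀ n : d → ℤ, (∀ y ∈ D, ∑ i, n i • y i = 0) → ∑ i, n i • x i = 0) :
    x ∈ closure (D : Set (UnitAddTorus d)) := by
  let f : C(UnitAddTorus d, ℂ) :=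
    ⟨fun z ↦ (‖(z : UnitAddTorus d ⧸ D)‖ : ℂ), by fun_prop⟩
  have hf_spectrum (n : d → ℤ) (hn : mFourierCoeff f n ≠ 0) (y : UnitAddTorus d) (hy : y ∈ D) :
      mFourier n y = 1 := by
    have hfy : (fun z ↦ f (z + y)) = f := by
      ext z
      simp [f, QuotientAddGroup.mk_add, (QuotientAddGroup.eq_zero_iff y).mpr hy]
    have := mFourierCoeff_comp_add_right f y n
    rw [hfy] at this
    exact (mul_eq_right₀ hn).mp this.symm
  have hf_translate : f.comp (ContinuousMap.addRight x) = f := by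
    refine eq_of_mFourierCoeff_eq fun n ↦ ?_
    change mFourierCoeff (fun z ↦ f (z + x)) n = _
    rw [mFourierCoeff_comp_add_right]
    by_cases hn : mFourierCoeff f n = 0
    · rw [hn, mul_zero]
    · have hnx := hx n fun y hy ↦ mFourier_eq_one_iff.mp (hf_spectrum n hn y hy)
      rw [mFourier_eq_one_iff.mpr hnx, one_mul]
  have hfx : f (0 + x) = f 0 := congr($hf_translate 0)
  simpa [f, QuotientAddGroup.norm_mk_eq_zero_iff_mem_closure] using hfx

end UnitAddTorus

lemma mem_closure_pi_of_forall_finset_restrict {ι : Type*} {X : ι → Type*}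
    [∀ i, TopologicalSpace (X i)] {s : Set (∀ i, X i)} {x : ∀ i, X i}
    (h : ∀ I : Finset ι, I.restrict x ∈ closure (I.restrict '' s)) : x ∈ closure s := by
  rw [mem_closure_iff]
  intro U hU hxU
  obtain ⟨I, u, hu, hIU⟩ := isOpen_pi_iff.mp hU x hxU
  have hV : IsOpen (Set.univ.pi fun i : I ↦ u i) :=
    isOpen_set_pi Set.finite_univ fun i _ ↦ (hu i i.2).1
  obtain ⟨_, hyV, y, hys, rfl⟩ :=
    mem_closure_iff.mp (h I) _ hV fun i _ ↦ (hu i i.2).2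
  exact ⟨y, hIU fun i hi ↦ hyV ⟨i, hi⟩ trivial, hys⟩

lemma exists_addMonoidHom_apply_eq {G Q : Type*} [AddCommGroup G] [IsAddTorsionFree G]
    [AddCommGroup Q] [DivisibleBy Q ℤ] {g : G} (hg : g ≠ 0) (q : Q) :
    ∃ χ : G →+ Q, χ g = q := by
  have hinj : Function.Injective (zmultiplesHom G g) := by
    intro m n hmn
    simp only [zmultiplesHom_apply] at hmn
    rwa [← sub_eq_zero, ← sub_smul, IsAddTorsionFree.zsmul_eq_zero_iff_left hg, sub_eq_zero] at hmn
  obtain ⟨χ, hχ⟩ :=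
    (Module.Baer.of_divisible Q).extension_property_addMonoidHom _ hinj (zmultiplesHom Q q)
  exact ⟨χ, by simpa using congr($hχ 1)⟩

lemma not_isOfFinAddOrder_sqrt_two : ¬IsOfFinAddOrder ((√2 : ℝ) : UnitAddCircle) := by
  rw [not_isOfFinAddOrder_iff_forall_rat_ne_div, div_one]
  exact fun q ↦ (irrational_sqrt_two.ne_rat q).symm

lemma exists_mem_apply_ne_zero_of_essential {G : Type*} [AddCommGroup G] [IsAddTorsionFree G]
    {S : AddSubgroup (G →+ UnitAddCircle)}
    (hS : ∀ B : AddSubgroup (G →+ UnitAddCircle), B ≠ ⊥ → S ⊓ B ≠ ⊥) {g : G} (hg : g ≠ 0) :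
    ∃ χ ∈ S, χ g ≠ 0 := by
  obtain ⟨χ₀, hχ₀⟩ := exists_addMonoidHom_apply_eq hg ((√2 : ℝ) : UnitAddCircle)
  have hzsmul (n : ℤ) (hn : n ≠ 0) : (n • χ₀) g ≠ 0 := by
    rw [AddMonoidHom.zsmul_apply, hχ₀]
    exact fun h ↦ not_isOfFinAddOrder_sqrt_two (isOfFinAddOrder_iff_zsmul_eq_zero.mpr ⟨n, hn, h⟩)
  have hB : AddSubgroup.zmultiples χ₀ ≠ ⊥ := by
    rw [Ne, AddSubgroup.zmultiples_eq_bot]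
    rintro rfl
    simpa using hzsmul 1 one_ne_zero
  obtain ⟨⟨χ, hχS, hχB⟩, hχ⟩ := (AddSubgroup.ne_bot_iff_exists_ne_zero).mp (hS _ hB)
  obtain ⟨n, rfl⟩ := AddSubgroup.mem_zmultiples_iff.mp hχB
  refine ⟨_, hχS, hzsmul n ?_⟩
  rintro rfl
  simp at hχ

theorem stmt12 {G : Type*} [AddCommGroup G]
    (hG : ∀ g : G, ∀ n : ℕ, 0 < n → n • g = 0 → g = 0)
    (S : AddSubgroup (G →+ AddCircle (1 : ℝ)))
    (hS : ∀ B : AddSubgroup (G →+ AddCircle (1 : ℝ)), B ≠ ⊥ → S ⊓ B ≠ ⊥) :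
    @Dense _ (dualTop G) (S : Set (G →+ AddCircle (1 : ℝ))) := by
  have : IsAddTorsionFree G := IsAddTorsionFree.of_not_isOfFinAddOrder fun g hg hfin ↦
    let ⟨n, hn, hng⟩ := isOfFinAddOrder_iff_nsmul_eq_zero.mp hfin
    hg (hG g n hn hng)
  intro φ
  rw [dualTop, closure_induced]
  refine mem_closure_pi_of_forall_finset_restrict fun F ↦ ?_
  let r : (G →+ UnitAddCircle) →+ UnitAddTorus F :=
    { toFun := fun χ g ↦ χ g, map_zero' := rfl, map_add' := fun _ _ ↦ rfl }
  have := UnitAddTorus.mem_closure_of_forall_sum_zsmul_eq_zero (S.map r) (x := r φ) ?_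
  · rw [Set.image_image]
    exact this
  intro n hn
  have hrel : ∑ g : F, n g • (g : G) = 0 := by
    by_contra hne
    obtain ⟨χ, hχS, hχ⟩ := exists_mem_apply_ne_zero_of_essential hS hne
    exact hχ (by simpa [r, map_sum] using hn (r χ) ⟨χ, hχS, rfl⟩)
  simpa [r, map_sum] using congr(φ $hrel)
end

section
/- Let G be an Abelian group and let R be a closed subgroup of Ĝ (in the topology of pointwise convergence). Then for every subgroup H of G, the closure of H in (G, τ_R) equals H + A(G, R), where A(G, R) = {g ∈ G : φ(g) = 0 for all φ ∈ R}. In particular, H is τ_R-closed if and only if H = H + A(G, R). -/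
/-!
Translating by `a ∈ A(G, R)` changes no character of `R`, so `τ_R` cannot separate `x` from
`x + a`; this gives `H + A(G, R) ⊆ closure H`. Conversely, if `g` lies in the closure of `H`,
every `φ ∈ R` vanishing on `H` vanishes at `g`. Being closed in the compact group `𝕋^G`, `R` is
compact, and evaluation at `g` is a continuous character of `R` vanishing on the common kernel of
the evaluations at points of `H`.

On a compact abelian group `K`, a subgroup `Λ` of continuous characters contains every continuous
character `φ` vanishing on its common kernel: on the quotient by that kernel `Λ` separates points,
so by Stone–Weierstrass the span of `Λ` is dense in `C(K, ℂ)`; if `φ ∉ Λ`, then `φ` is orthogonal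
in `L²(Haar)` to every element of `Λ`, hence to everything, including itself.
So evaluation at `g` agrees on `R` with evaluation at some `h ∈ H`, i.e. `g - h ∈ A(G, R)`.
-/

open MeasureTheory Topology Set
open scoped Pointwise
open scoped InnerProductSpace

local notation "𝕋" => AddCircle (1 : ℝ)

namespace ContinuousAddMonoidHom

variable {K : Type*} [AddCommGroup K] [TopologicalSpace K]

noncomputable def charFunction (χ : K →ₜ+ 𝕋) : C(K, ℂ) :=
  ⟨fun x => AddCircle.toCircle (χ x), by fun_prop⟩

@[simp]
lemma charFunction_apply (χ : K →ₜ+ 𝕋) (x : K) :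
    charFunction χ x = AddCircle.toCircle (χ x) := rfl

lemma charFunction_add (χ ψ : K →ₜ+ 𝕋) :
    charFunction (χ + ψ) = charFunction χ * charFunction ψ := by
  ext x; simp [AddCircle.toCircle_add]

lemma charFunction_zero : charFunction (0 : K →ₜ+ 𝕋) = 1 := by
  ext x; simp

lemma star_charFunction (χ : K →ₜ+ 𝕋) : star (charFunction χ) = charFunction (-χ) := by
  ext x
  change (starRingEnd ℂ) _ = ((-(χ x)).toCircle : ℂ)
  rw [AddCircle.toCircle_neg, Circle.coe_inv_eq_conj]
  rfl

lemma integral_charFunction_eq_zero [MeasurableSpace K] [MeasurableAdd K]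
    (μ : Measure K) [μ.IsAddLeftInvariant] {χ : K →ₜ+ 𝕋} (hχ : χ ≠ 0) :
    ∫ x, charFunction χ x ∂μ = 0 := by
  obtain ⟨y, hy⟩ : ∃ y, χ y ≠ 0 := by
    by_contra! h
    exact hχ (ext h)
  have hy' : charFunction χ y ≠ 1 := by
    rw [charFunction_apply, ← Circle.coe_one, ← AddCircle.toCircle_zero, Ne, Circle.coe_inj,
      (AddCircle.injective_toCircle one_ne_zero).eq_iff]
    exact hy
  have htranslate : charFunction χ y * ∫ x, charFunction χ x ∂μ = ∫ x, charFunction χ x ∂μ := by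
    rw [← integral_const_mul]
    simpa [AddCircle.toCircle_add] using
      integral_add_left_eq_self (fun x => charFunction χ x) y (μ := μ)
  have : (charFunction χ y - 1) * ∫ x, charFunction χ x ∂μ = 0 := by
    rw [sub_mul, htranslate, one_mul, sub_self]
  exact (mul_eq_zero.mp this).resolve_left (sub_ne_zero.mpr hy')

lemma span_charFunction_dense [CompactSpace K] {Λ : AddSubgroup (K →ₜ+ 𝕋)}
    (hΛ : ∀ x ≠ 0, ∃ χ ∈ Λ, χ x ≠ 0) :
    (Submodule.span ℂ (charFunction '' (Λ : Set (K →ₜ+ 𝕋)))).topologicalClosure = ⊤ := by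
  let A : StarSubalgebra ℂ C(K, ℂ) :=
    { Algebra.adjoin ℂ (charFunction '' (Λ : Set (K →ₜ+ 𝕋))) with
      star_mem' := by
        change Algebra.adjoin ℂ _ ≤ star (Algebra.adjoin ℂ _)
        refine Algebra.adjoin_le ?_
        rintro - ⟨χ, hχ, rfl⟩
        exact Algebra.subset_adjoin ⟨-χ, neg_mem hχ, (star_charFunction χ).symm⟩ }
  have hA : Subalgebra.toSubmodule A.toSubalgebra =
      Submodule.span ℂ (charFunction '' (Λ : Set (K →ₜ+ 𝕋))) := by
    refine Algebra.adjoin_eq_span_of_subset ℂ (subset_trans ?_ Submodule.subset_span)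
    intro f hf
    refine Submonoid.closure_induction (fun _ h => h) ⟨0, zero_mem Λ, charFunction_zero⟩ ?_ hf
    rintro - - - - ⟨χ, hχ, rfl⟩ ⟨ψ, hψ, rfl⟩
    exact ⟨χ + ψ, add_mem hχ hψ, charFunction_add χ ψ⟩
  have hsep : A.SeparatesPoints := by
    intro x y hxy
    obtain ⟨χ, hχ, hne⟩ := hΛ (x - y) (sub_ne_zero.mpr hxy)
    refine ⟨_, ⟨charFunction χ, Algebra.subset_adjoin ⟨χ, hχ, rfl⟩, rfl⟩, fun h => hne ?_⟩
    rw [map_sub, sub_eq_zero]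
    exact AddCircle.injective_toCircle one_ne_zero (Circle.ext h)
  rw [← hA]
  exact congr_arg (fun B : StarSubalgebra ℂ C(K, ℂ) => Subalgebra.toSubmodule B.toSubalgebra)
    (ContinuousMap.starSubalgebra_topologicalClosure_eq_top_of_separatesPoints A hsep)

theorem mem_of_separatesPoints [IsTopologicalAddGroup K] [CompactSpace K]
    {Λ : AddSubgroup (K →ₜ+ 𝕋)} (hΛ : ∀ x ≠ 0, ∃ χ ∈ Λ, χ x ≠ 0) (φ : K →ₜ+ 𝕋) : φ ∈ Λ := by
  by_contra hφ
  borelize K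
  let μ : Measure K := Measure.addHaar
  let v := ContinuousMap.toLp 2 μ ℂ (charFunction φ)
  let L : C(K, ℂ) →L[ℂ] ℂ := (innerSL ℂ v).comp (ContinuousMap.toLp 2 μ ℂ)
  have hL : Submodule.span ℂ (charFunction '' (Λ : Set (K →ₜ+ 𝕋))) ≤
      LinearMap.ker (L : C(K, ℂ) →ₗ[ℂ] ℂ) := by
    refine Submodule.span_le.mpr ?_
    rintro - ⟨χ, hχ, rfl⟩
    have hne : χ - φ ≠ 0 := sub_ne_zero.mpr (by rintro rfl; exact hφ hχ)
    change ⟪v, ContinuousMap.toLp 2 μ ℂ (charFunction χ)⟫_ℂ = 0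
    rw [ContinuousMap.inner_toLp, ← integral_charFunction_eq_zero μ hne]
    congr 1
    ext x
    rw [sub_eq_add_neg, charFunction_add, ← star_charFunction]
    rfl
  have hLφ : L (charFunction φ) = 0 :=
    Submodule.topologicalClosure_minimal _ hL L.isClosed_ker
      (by rw [span_charFunction_dense hΛ]; trivial)
  have hv : v = 0 := inner_self_eq_zero.mp hLφ
  have h0 : charFunction φ = 0 :=
    ContinuousMap.toLp_injective μ (by rw [(ContinuousMap.toLp 2 μ ℂ).map_zero]; exact hv)
  simpa using DFunLike.congr_fun h0 0

theorem mem_of_forall_apply_eq_zero [IsTopologicalAddGroup K] [CompactSpace K]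
    {Λ : AddSubgroup (K →ₜ+ 𝕋)} {φ : K →ₜ+ 𝕋} (hφ : ∀ x, (∀ χ ∈ Λ, χ x = 0) → φ x = 0) :
    φ ∈ Λ := by
  let N : AddSubgroup K := ⨅ χ ∈ Λ, χ.toAddMonoidHom.ker
  have mem_N {x : K} : x ∈ N ↔ ∀ χ ∈ Λ, χ x = 0 := by
    simp [N, AddSubgroup.mem_iInf]
  let mk : K →ₜ+ K ⧸ N := ⟨QuotientAddGroup.mk' N, continuous_quot_mk⟩
  let lift (χ : K →ₜ+ 𝕋) (hχ : ∀ x ∈ N, χ x = 0) : K ⧸ N →ₜ+ 𝕋 :=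
    ⟨QuotientAddGroup.lift N χ.toAddMonoidHom hχ,
      (QuotientAddGroup.isQuotientMap_mk N).continuous_iff.mpr χ.continuous⟩
  let Λ' : AddSubgroup (K ⧸ N →ₜ+ 𝕋) :=
    Λ.comap (AddMonoidHom.mk' (fun ψ => ψ.comp mk) fun _ _ => rfl)
  have hsep : ∀ q ≠ 0, ∃ ψ ∈ Λ', ψ q ≠ 0 := by
    intro q hq
    obtain ⟨x, rfl⟩ := QuotientAddGroup.mk_surjective q
    obtain ⟨χ, hχ, hχx⟩ : ∃ χ ∈ Λ, χ x ≠ 0 := by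
      by_contra! h
      exact hq ((QuotientAddGroup.eq_zero_iff x).mpr (mem_N.mpr h))
    exact ⟨lift χ fun y hy => mem_N.mp hy χ hχ, hχ, hχx⟩
  exact mem_of_separatesPoints hsep (lift φ fun x hx => hφ x (mem_N.mp hx))

end ContinuousAddMonoidHom

section CharacterTopology

variable {G : Type*} [AddCommGroup G] {S : AddSubgroup (G →+ 𝕋)}

lemma continuous_tauS_of_mem {φ : G →+ 𝕋} (hφ : φ ∈ S) : Continuous[tauS S, _] φ :=
  continuous_iInf_dom (i := φ) (continuous_iInf_dom (i := hφ) continuous_induced_dom)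

lemma inseparable_tauS {x y : G} (h : ∀ φ ∈ S, φ x = φ y) : @Inseparable G (tauS S) x y := by
  change @nhds G (tauS S) x = @nhds G (tauS S) y
  unfold tauS
  simp only [nhds_iInf, nhds_induced]
  exact iInf_congr fun φ => iInf_congr fun hφ => by rw [h φ hφ]

lemma add_subset_closure_tauS (s : Set G) :
    s + {g : G | ∀ φ ∈ S, φ g = 0} ⊆ closure[tauS S] s := by
  let := tauS S
  rintro _ ⟨x, hx, a, ha, rfl⟩
  have : Inseparable x (x + a) := inseparable_tauS fun φ hφ => by rw [map_add, ha φ hφ, add_zero]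
  exact closure_mono (singleton_subset_iff.mpr hx) this.specializes.mem_closure

lemma apply_eq_zero_of_mem_closure_tauS {s : Set G} {g : G} (hg : g ∈ closure[tauS S] s)
    {φ : G →+ 𝕋} (hφ : φ ∈ S) (hs : ∀ x ∈ s, φ x = 0) : φ g = 0 := by
  let := tauS S
  exact closure_minimal hs (isClosed_singleton.preimage (continuous_tauS_of_mem hφ)) hg

end CharacterTopology

section DualTopology

attribute [local instance] dualTop

variable {G : Type*} [AddCommGroup G]

lemma isClosedEmbedding_coe_dualTop : IsClosedEmbedding (DFunLike.coe : (G →+ 𝕋) → G → 𝕋) :=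
  ⟨⟨⟨rfl⟩, DFunLike.coe_injective⟩, AddMonoidHom.isClosed_range_coe _ _⟩

instance compactSpace_dualTop : CompactSpace (G →+ 𝕋) :=
  isClosedEmbedding_coe_dualTop.compactSpace

instance isTopologicalAddGroup_dualTop : IsTopologicalAddGroup (G →+ 𝕋) :=
  topologicalAddGroup_induced (AddMonoidHom.coeFn G 𝕋)

def evalChar (R : AddSubgroup (G →+ 𝕋)) : G →+ (R →ₜ+ 𝕋) where
  toFun g :=
    { toFun := fun φ => (φ : G →+ 𝕋) g
      map_zero' := rfl
      map_add' := fun _ _ => rfl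
      continuous_toFun :=
        (continuous_apply g).comp (continuous_induced_dom.comp continuous_subtype_val) }
  map_zero' := by ext φ; exact map_zero (φ : G →+ 𝕋)
  map_add' _ _ := by ext φ; exact map_add (φ : G →+ 𝕋) _ _

theorem closure_tauS_eq_add {R : AddSubgroup (G →+ 𝕋)} (hR : IsClosed (R : Set (G →+ 𝕋)))
    (H : AddSubgroup G) :
    closure[tauS R] (H : Set G) = H + {g : G | ∀ φ ∈ R, φ g = 0} := by
  refine Subset.antisymm (fun g hg => ?_) (add_subset_closure_tauS _)
  have : CompactSpace R := isCompact_iff_compactSpace.mp hR.isCompact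
  obtain ⟨h, hH, hgh⟩ : evalChar R g ∈ H.map (evalChar R) :=
    ContinuousAddMonoidHom.mem_of_forall_apply_eq_zero fun φ hφ =>
      apply_eq_zero_of_mem_closure_tauS hg φ.2 fun h hh => hφ _ ⟨h, hh, rfl⟩
  refine ⟨h, hH, g - h, fun φ hφ => ?_, add_sub_cancel _ _⟩
  rw [map_sub, sub_eq_zero]
  exact (DFunLike.congr_fun hgh ⟨φ, hφ⟩).symm

end DualTopology

open Pointwise in
theorem stmt14 {G : Type*} [AddCommGroup G]
    (R : AddSubgroup (G →+ AddCircle (1 : ℝ)))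
    (hR : @IsClosed _ (dualTop G) (R : Set (G →+ AddCircle (1 : ℝ))))
    (H : AddSubgroup G) :
    @closure G (tauS R) (H : Set G) = (H : Set G) + {g : G | ∀ φ ∈ R, φ g = 0} ∧
      (@IsClosed G (tauS R) (H : Set G) ↔
        (H : Set G) = (H : Set G) + {g : G | ∀ φ ∈ R, φ g = 0}) := by
  let := tauS R
  refine ⟨closure_tauS_eq_add hR H, ?_⟩
  rw [← closure_tauS_eq_add hR H, eq_comm]
  exact closure_eq_iff_isClosed.symm
end
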